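/- arXiv:0909.0927 — 5 statements merged into one kernel-verified Lean document; each statement's English description precedes it below -/
import Mathlib

section
/- Let V be the Heitmann–Radin sticky disc potential and let R ≥ 1 be an integer. The configuration consisting of the N = 3R² + 3R + 1 points of h̄_R ∩ L (the hexagonal subset of the triangular lattice of radius R) has energy E = −6N + 2√(12N − 3). -/
open Set
open scoped Classical

noncomputable section

abbrev E2 := EuclideanSpace ℝ (Fin 2)

/-- The Heitmann-Radin sticky disc potential: `+∞` for `r < 1`, `-1` at `r = 1`,
`0` for `r > 1`. -/
def VHR : ℝ → EReal := fun r => if r < 1 then ⊤ else if r = 1 then -1 else 0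

/-- Energy of a finite configuration (sum over ordered pairs of distinct points). -/
def energyF (V : ℝ → EReal) (S : Finset E2) : EReal :=
  ∑ x ∈ S, ∑ y ∈ S.erase x, V (dist x y)

def e1 : E2 := (WithLp.equiv 2 _).symm ![1, 0]

def e2 : E2 := (WithLp.equiv 2 _).symm ![1 / 2, Real.sqrt 3 / 2]

/-- The triangular lattice `L = {m e₁ + n e₂ : m, n ∈ ℤ}`. -/
def triLattice : Set E2 := {p | ∃ m n : ℤ, p = (m : ℝ) • e1 + (n : ℝ) • e2}

/-- The closed hexagon `h̄_R = conv {±R e₁, ±R e₂, ±R(e₂ - e₁)}`. -/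
def hex (R : ℝ) : Set E2 :=
  convexHull ℝ {R • e1, -(R • e1), R • e2, -(R • e2), R • (e2 - e1), -(R • (e2 - e1))}

/-! In the coordinates `(m, n) ↦ m e₁ + n e₂` the hexagon `h̄_R` becomes
`|m|, |n|, |m + n| ≤ R`, and two lattice points whose coordinates differ by `(a, b)` are at
distance `√(a² + ab + b²)`, which is `≥ 1` off the diagonal and `= 1` exactly for the six unit
neighbours. So the energy is minus the number of ordered neighbour pairs. The rotation by `60°`,
`(m, n) ↦ (-n, m + n)`, preserves the hexagon and permutes the six directions, so each direction
contributes as many pairs as the horizontal one, `3R² + R`. Hence `E = -6(3R² + R)`, which is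
`-6N + 2(6R + 3)` with `(6R + 3)² = 12N - 3`. -/

open scoped Finset

def triCoord : ℝ × ℝ →ₗ[ℝ] E2 :=
  (LinearMap.fst ℝ ℝ ℝ).smulRight e1 + (LinearMap.snd ℝ ℝ ℝ).smulRight e2

lemma triCoord_apply (x : ℝ × ℝ) : triCoord x = x.1 • e1 + x.2 • e2 := rfl

lemma triCoord_apply_zero (x : ℝ × ℝ) : triCoord x 0 = x.1 + x.2 / 2 := by
  simp only [triCoord_apply, e1, e2, WithLp.equiv_symm_apply, PiLp.add_apply, PiLp.smul_apply,
    Matrix.cons_val_zero, smul_eq_mul]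
  ring

lemma triCoord_apply_one (x : ℝ × ℝ) : triCoord x 1 = x.2 * (√3 / 2) := by
  simp [triCoord_apply, e1, e2]

lemma triCoord_injective : Function.Injective triCoord := by
  intro x y hxy
  have h1 : x.2 * (√3 / 2) = y.2 * (√3 / 2) := by
    rw [← triCoord_apply_one, ← triCoord_apply_one, hxy]
  have h0 : x.1 + x.2 / 2 = y.1 + y.2 / 2 := by
    rw [← triCoord_apply_zero, ← triCoord_apply_zero, hxy]
  have h2 : x.2 = y.2 := mul_right_cancel₀ (by positivity) h1
  exact Prod.ext (by linarith) h2

def hexVertices (R : ℝ) : Set (ℝ × ℝ) :=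
  {(R, 0), (-R, 0), (0, R), (0, -R), (-R, R), (R, -R)}

def hexCoords (R : ℝ) : Set (ℝ × ℝ) :=
  {x | x.1 ∈ Icc (-R) R ∧ x.2 ∈ Icc (-R) R ∧ x.1 + x.2 ∈ Icc (-R) R}

lemma convex_hexCoords (R : ℝ) : Convex ℝ (hexCoords R) :=
  ((convex_Icc (-R) R).linear_preimage (LinearMap.fst ℝ ℝ ℝ)).inter <|
    ((convex_Icc (-R) R).linear_preimage (LinearMap.snd ℝ ℝ ℝ)).inter <|
    (convex_Icc (-R) R).linear_preimage (LinearMap.fst ℝ ℝ ℝ + LinearMap.snd ℝ ℝ ℝ)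

lemma Convex.smul_add_smul_mem_of_zero_mem {𝕜 E : Type*} [Field 𝕜] [LinearOrder 𝕜]
    [IsStrictOrderedRing 𝕜] [AddCommGroup E] [Module 𝕜 E] {s : Set E} (hs : Convex 𝕜 s)
    (h0 : (0 : E) ∈ s) {u v : E} (hu : u ∈ s) (hv : v ∈ s) {a b : 𝕜} (ha : 0 ≤ a) (hb : 0 ≤ b)
    (hab : a + b ≤ 1) : a • u + b • v ∈ s := by
  have H := hs.sum_mem (t := Finset.univ) (w := ![1 - a - b, a, b]) (z := ![0, u, v])
    (by intro i _; fin_cases i <;> simp <;> linarith) (by simp [Fin.sum_univ_three]; ring)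
    (by intro i _; fin_cases i <;> simpa)
  simpa [Fin.sum_univ_three] using H

lemma convexHull_hexVertices {R : ℝ} (hR : 0 ≤ R) : convexHull ℝ (hexVertices R) = hexCoords R := by
  apply le_antisymm
  · refine convexHull_min ?_ (convex_hexCoords R)
    simp only [hexVertices, insert_subset_iff, singleton_subset_iff]
    refine ⟨?_, ?_, ?_, ?_, ?_, ?_⟩ <;>
      refine ⟨⟨?_, ?_⟩, ⟨?_, ?_⟩, ⟨?_, ?_⟩⟩ <;> dsimp only <;> linarith
  · set H := convexHull ℝ (hexVertices R)
    have hH : Convex ℝ H := convex_convexHull ℝ _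
    have hV : ∀ v ∈ hexVertices R, v ∈ H := fun v hv => subset_convexHull ℝ _ hv
    have hA : ((R, 0) : ℝ × ℝ) ∈ H := hV _ (by simp [hexVertices])
    have hB : ((0, R) : ℝ × ℝ) ∈ H := hV _ (by simp [hexVertices])
    have hC : ((-R, R) : ℝ × ℝ) ∈ H := hV _ (by simp [hexVertices])
    have hD : ((-R, 0) : ℝ × ℝ) ∈ H := hV _ (by simp [hexVertices])
    have hE : ((0, -R) : ℝ × ℝ) ∈ H := hV _ (by simp [hexVertices])
    have hF : ((R, -R) : ℝ × ℝ) ∈ H := hV _ (by simp [hexVertices])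
    have h0 : (0 : ℝ × ℝ) ∈ H := by
      convert hH hA hD (by norm_num : (0 : ℝ) ≤ 1 / 2) (by norm_num : (0 : ℝ) ≤ 1 / 2) (by norm_num)
      ext <;> simp
    rintro ⟨x, y⟩ ⟨⟨hx, hx'⟩, ⟨hy, hy'⟩, ⟨hxy, hxy'⟩⟩
    dsimp only at *
    obtain rfl | hR := hR.eq_or_lt
    · obtain ⟨rfl, rfl⟩ : x = 0 ∧ y = 0 := ⟨by linarith, by linarith⟩
      exact h0
    -- each of the six sectors cut out by the coordinate lines and `x + y = 0` is a triangle
    -- spanned by `0` and two adjacent vertices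
    have sector : ∀ {u v : ℝ × ℝ}, u ∈ H → v ∈ H → ∀ a b : ℝ, 0 ≤ a → 0 ≤ b → a + b ≤ R →
        R • (x, y) = a • u + b • v → (x, y) ∈ H := by
      intro u v hu hv a b ha hb hab hxy
      rw [← inv_smul_smul₀ hR.ne' (x, y), hxy, smul_add, smul_smul, smul_smul, inv_mul_eq_div,
        inv_mul_eq_div]
      exact hH.smul_add_smul_mem_of_zero_mem h0 hu hv (by positivity) (by positivity)
        (by rwa [← add_div, div_le_one hR])
    rcases le_total 0 x with hx0 | hx0 <;> rcases le_total 0 y with hy0 | hy0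
    · exact sector hA hB x y hx0 hy0 hxy' (by ext <;> simp <;> ring)
    · rcases le_total 0 (x + y) with hs0 | hs0
      · exact sector hA hF (x + y) (-y) hs0 (by linarith) (by linarith) (by ext <;> simp <;> ring)
      · exact sector hF hE x (-x - y) hx0 (by linarith) (by linarith) (by ext <;> simp <;> ring)
    · rcases le_total 0 (x + y) with hs0 | hs0
      · exact sector hB hC (x + y) (-x) hs0 (by linarith) (by linarith) (by ext <;> simp <;> ring)
      · exact sector hD hC (-x - y) y (by linarith) hy0 (by linarith) (by ext <;> simp <;> ring)
    · exact sector hD hE (-x) (-y) (by linarith) (by linarith) (by linarith)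
        (by ext <;> simp <;> ring)

lemma hex_eq_image {R : ℝ} (hR : 0 ≤ R) : hex R = triCoord '' hexCoords R := by
  rw [← convexHull_hexVertices hR, triCoord.image_convexHull]
  simp only [hex, hexVertices, image_insert_eq, image_singleton, triCoord_apply, zero_smul,
    add_zero, zero_add, neg_smul, smul_sub, neg_sub, neg_add_eq_sub, ← sub_eq_add_neg, zero_sub]

def latticePoint (p : ℤ × ℤ) : E2 := triCoord ((p.1 : ℝ), (p.2 : ℝ))

lemma latticePoint_injective : Function.Injective latticePoint := fun p q h => by
  simpa only [Prod.mk.injEq, Int.cast_inj, Prod.ext_iff] using triCoord_injective h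

lemma latticePoint_sub (p q : ℤ × ℤ) :
    latticePoint (p - q) = latticePoint p - latticePoint q := by
  simp only [latticePoint, Prod.fst_sub, Prod.snd_sub, Int.cast_sub, ← map_sub, Prod.mk_sub_mk]

def hexFinset (R : ℕ) : Finset (ℤ × ℤ) :=
  {p ∈ Finset.Icc (-(R : ℤ)) R ×ˢ Finset.Icc (-(R : ℤ)) R | p.1 + p.2 ∈ Finset.Icc (-(R : ℤ)) R}

lemma mem_hexFinset {R : ℕ} {p : ℤ × ℤ} :
    p ∈ hexFinset R ↔ -(R : ℤ) ≤ p.1 ∧ p.1 ≤ R ∧ -(R : ℤ) ≤ p.2 ∧ p.2 ≤ R ∧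
      -(R : ℤ) ≤ p.1 + p.2 ∧ p.1 + p.2 ≤ R := by
  simp only [hexFinset, Finset.mem_filter, Finset.mem_product, Finset.mem_Icc, and_assoc]

lemma mem_hexFinset_iff_mem_hexCoords {R : ℕ} {p : ℤ × ℤ} :
    p ∈ hexFinset R ↔ ((p.1 : ℝ), (p.2 : ℝ)) ∈ hexCoords R := by
  simp only [mem_hexFinset, hexCoords, mem_ofPred_eq, mem_Icc, and_assoc]
  norm_cast

lemma hex_inter_triLattice (R : ℕ) :
    hex R ∩ triLattice = latticePoint '' (hexFinset R : Set (ℤ × ℤ)) := by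
  ext x
  rw [hex_eq_image R.cast_nonneg]
  constructor
  · rintro ⟨⟨y, hy, rfl⟩, m, n, hmn⟩
    obtain rfl : y = ((m : ℝ), (n : ℝ)) := triCoord_injective hmn
    exact ⟨(m, n), mem_hexFinset_iff_mem_hexCoords.2 hy, rfl⟩
  · rintro ⟨p, hp, rfl⟩
    exact ⟨⟨_, mem_hexFinset_iff_mem_hexCoords.1 hp, rfl⟩, p.1, p.2, rfl⟩

def hexForm (v : ℤ × ℤ) : ℤ := v.1 ^ 2 + v.1 * v.2 + v.2 ^ 2

lemma norm_latticePoint_sq (v : ℤ × ℤ) : ‖latticePoint v‖ ^ 2 = hexForm v := by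
  rw [EuclideanSpace.norm_sq_eq, Fin.sum_univ_two, latticePoint, triCoord_apply_zero,
    triCoord_apply_one, Real.norm_eq_abs, Real.norm_eq_abs, sq_abs, sq_abs]
  push_cast [hexForm]
  linear_combination (v.2 : ℝ) ^ 2 / 4 * Real.sq_sqrt (show (0 : ℝ) ≤ 3 by norm_num)

lemma dist_latticePoint (p q : ℤ × ℤ) :
    dist (latticePoint p) (latticePoint q) = √(hexForm (p - q)) := by
  rw [dist_eq_norm, ← latticePoint_sub, ← norm_latticePoint_sq, Real.sqrt_sq (norm_nonneg _)]

lemma one_le_hexForm {v : ℤ × ℤ} (hv : v ≠ 0) : 1 ≤ hexForm v := by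
  obtain ⟨a, b⟩ := v
  have hab : a ≠ 0 ∨ b ≠ 0 := by
    by_contra! h
    exact hv (Prod.ext h.1 h.2)
  unfold hexForm
  rcases hab with h | h <;>
    nlinarith [sq_nonneg (a + b), sq_pos_of_ne_zero h, sq_nonneg a, sq_nonneg b]

def unitNbrs : Finset (ℤ × ℤ) := {(1, 0), (0, 1), (-1, 1), (-1, 0), (0, -1), (1, -1)}

lemma hexForm_eq_one_iff {v : ℤ × ℤ} : hexForm v = 1 ↔ v ∈ unitNbrs := by
  obtain ⟨a, b⟩ := v
  constructor
  · intro h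
    unfold hexForm at h
    -- `4 (a² + ab + b²) = (2a + b)² + 3b² = (a + 2b)² + 3a²`
    have ha : -1 ≤ a ∧ a ≤ 1 := by constructor <;> nlinarith [sq_nonneg (a + 2 * b)]
    have hb : -1 ≤ b ∧ b ≤ 1 := by constructor <;> nlinarith [sq_nonneg (2 * a + b)]
    obtain ⟨ha₁, ha₂⟩ := ha
    obtain ⟨hb₁, hb₂⟩ := hb
    interval_cases a <;> interval_cases b <;> simp_all [unitNbrs]
  · simp only [unitNbrs, Finset.mem_insert, Finset.mem_singleton, Prod.mk.injEq]
    rintro (⟨rfl, rfl⟩ | ⟨rfl, rfl⟩ | ⟨rfl, rfl⟩ | ⟨rfl, rfl⟩ | ⟨rfl, rfl⟩ | ⟨rfl, rfl⟩) <;> rfl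

lemma VHR_dist_latticePoint {p q : ℤ × ℤ} (hpq : p ≠ q) :
    VHR (dist (latticePoint p) (latticePoint q)) =
      ((-(if p - q ∈ unitNbrs then 1 else 0) : ℝ) : EReal) := by
  have h1 : (1 : ℝ) ≤ hexForm (p - q) := by exact_mod_cast one_le_hexForm (sub_ne_zero.2 hpq)
  have hN : √(hexForm (p - q) : ℝ) = 1 ↔ p - q ∈ unitNbrs := by
    rw [Real.sqrt_eq_one, ← hexForm_eq_one_iff]
    exact_mod_cast Iff.rfl
  rw [dist_latticePoint, VHR, if_neg (not_lt.2 (Real.one_le_sqrt.2 h1))]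
  by_cases h : p - q ∈ unitNbrs
  · simp [h, hN.2 h]
  · simp [h, mt hN.1 h]

lemma EReal.coe_finset_sum {ι : Type*} (s : Finset ι) (f : ι → ℝ) :
    ((∑ i ∈ s, f i : ℝ) : EReal) = ∑ i ∈ s, (f i : EReal) :=
  map_sum (⟨⟨Real.toEReal, EReal.coe_zero⟩, EReal.coe_add⟩ : ℝ →+ EReal) f s

lemma energyF_image {ι : Type*} [DecidableEq ι] (V : ℝ → EReal) (s : Finset ι) {f : ι → E2}
    (hf : Function.Injective f) :
    energyF V (s.image f) = ∑ p ∈ s, ∑ q ∈ s.erase p, V (dist (f p) (f q)) := by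
  rw [energyF, Finset.sum_image hf.injOn]
  refine Finset.sum_congr rfl fun p _ => ?_
  rw [← Finset.image_erase hf, Finset.sum_image hf.injOn]

lemma energyF_VHR_image_latticePoint (s : Finset (ℤ × ℤ)) :
    energyF VHR (s.image latticePoint) =
      ((-(#{z ∈ s ×ˢ s | z.1 - z.2 ∈ unitNbrs} : ℕ) : ℝ) : EReal) := by
  have hzero : ∀ p ∈ s, (if p - p ∈ unitNbrs then (1 : ℝ) else 0) = 0 := by
    intro p _
    rw [sub_self, if_neg (by decide)]
  calc energyF VHR (s.image latticePoint)
      = ∑ p ∈ s, ∑ q ∈ s.erase p, ((-(if p - q ∈ unitNbrs then 1 else 0) : ℝ) : EReal) := by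
        rw [energyF_image VHR s latticePoint_injective]
        refine Finset.sum_congr rfl fun p _ => Finset.sum_congr rfl fun q hq => ?_
        exact VHR_dist_latticePoint (Finset.ne_of_mem_erase hq).symm
    _ = ((-∑ p ∈ s, ∑ q ∈ s, (if p - q ∈ unitNbrs then 1 else 0) : ℝ) : EReal) := by
        rw [← Finset.sum_neg_distrib, EReal.coe_finset_sum]
        refine Finset.sum_congr rfl fun p hp => ?_
        rw [← Finset.sum_erase s (hzero p hp), ← Finset.sum_neg_distrib, EReal.coe_finset_sum]
    _ = _ := by
        rw [← Finset.sum_product', Finset.sum_boole]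

lemma card_filter_sub_mem_product {G : Type*} [AddCommGroup G] [DecidableEq G] (s N : Finset G) :
    #{z ∈ s ×ˢ s | z.1 - z.2 ∈ N} = ∑ v ∈ N, #{p ∈ s | p - v ∈ s} := by
  rw [Finset.card_eq_sum_card_fiberwise (s := {z ∈ s ×ˢ s | z.1 - z.2 ∈ N})
    (f := fun z => z.1 - z.2) fun z hz => (Finset.mem_filter.1 hz).2]
  refine Finset.sum_congr rfl fun v hv => ?_
  refine Finset.card_nbij' Prod.fst (fun p => (p, p - v)) ?_ ?_ ?_ ?_
  · rintro ⟨p, q⟩ hpq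
    simp only [Finset.coe_filter, Finset.mem_filter, Finset.mem_product, mem_ofPred_eq] at hpq ⊢
    obtain ⟨⟨⟨hp, hq⟩, -⟩, rfl⟩ := hpq
    rwa [sub_sub_cancel, and_iff_right hp]
  · intro p hp
    simp only [Finset.coe_filter, Finset.mem_filter, Finset.mem_product, mem_ofPred_eq] at hp ⊢
    rw [sub_sub_cancel]
    exact ⟨⟨hp, hv⟩, rfl⟩
  · rintro ⟨p, q⟩ hpq
    simp only [Finset.coe_filter, mem_ofPred_eq] at hpq
    simp only [← hpq.2, sub_sub_cancel]
  · exact fun p _ => rfl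

def rot60 : ℤ × ℤ ≃+ ℤ × ℤ where
  toFun v := (-v.2, v.1 + v.2)
  invFun v := (v.1 + v.2, -v.1)
  left_inv v := by ext <;> simp
  right_inv v := by ext <;> simp
  map_add' v w := by ext <;> simp only [Prod.fst_add, Prod.snd_add] <;> ring

lemma rot60_apply (v : ℤ × ℤ) : rot60 v = (-v.2, v.1 + v.2) := rfl

lemma rot60_mem_hexFinset {R : ℕ} {p : ℤ × ℤ} : rot60 p ∈ hexFinset R ↔ p ∈ hexFinset R := by
  simp only [mem_hexFinset, rot60_apply]
  omega

lemma card_filter_sub_map_mem {G : Type*} [AddCommGroup G] [DecidableEq G] (s : Finset G)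
    {e : G ≃+ G} (he : ∀ p, e p ∈ s ↔ p ∈ s) (v : G) :
    #{p ∈ s | p - e v ∈ s} = #{p ∈ s | p - v ∈ s} := by
  refine Finset.card_nbij' e.symm e ?_ ?_ ?_ ?_
  · intro p hp
    simp only [Finset.coe_filter, mem_ofPred_eq] at hp ⊢
    rw [← he, ← he (_ - v), map_sub, e.apply_symm_apply]
    exact hp
  · intro p hp
    simp only [Finset.coe_filter, mem_ofPred_eq] at hp ⊢
    rw [he, ← map_sub, he]
    exact hp
  · exact fun p _ => e.apply_symm_apply p
  · exact fun p _ => e.symm_apply_apply p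

lemma sum_unitNbrs_card_filter_sub_mem (R : ℕ) :
    ∑ v ∈ unitNbrs, #{p ∈ hexFinset R | p - v ∈ hexFinset R} =
      6 * #{p ∈ hexFinset R | p - (1, 0) ∈ hexFinset R} := by
  have hrot : ∀ k : ℕ, #{p ∈ hexFinset R | p - rot60^[k] (1, 0) ∈ hexFinset R} =
      #{p ∈ hexFinset R | p - (1, 0) ∈ hexFinset R} := by
    intro k
    induction k with
    | zero => rfl
    | succ k ih =>
      rw [Function.iterate_succ_apply',
        card_filter_sub_map_mem _ (fun _ => rot60_mem_hexFinset), ih]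
  rw [Finset.sum_const_nat fun v hv => ?_]
  · rfl
  simp only [unitNbrs, Finset.mem_insert, Finset.mem_singleton] at hv
  rcases hv with rfl | rfl | rfl | rfl | rfl | rfl
  exacts [hrot 0, hrot 1, hrot 2, hrot 3, hrot 4, hrot 5]

-- the summand counts the horizontal edges `p - (1, 0) → p` of the hexagon with `p.1 = m`
lemma sum_Ioc_columnEdgeCount (R : ℕ) :
    ∑ m ∈ Finset.Ioc (-(R : ℤ)) R, (min (R : ℤ) (R - m) - max (-(R : ℤ) - 1) (-R - m)) =
      3 * R ^ 2 + R := by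
  have hR : (0 : ℤ) ≤ R := R.cast_nonneg
  rw [← Finset.Ioc_union_Ioc_eq_Ioc (neg_nonpos.2 hR) hR,
    Finset.sum_union (Finset.Ioc_disjoint_Ioc_of_le le_rfl)]
  have hshift :
      Finset.Ioc (-(R : ℤ)) 0 = (Finset.Ioc 0 (R : ℤ)).map (addRightEmbedding (-(R : ℤ))) := by
    rw [Finset.map_add_right_Ioc, zero_add, add_neg_cancel]
  -- columns `m - R` and `m` together contain `3R + 1` edges
  rw [hshift, Finset.sum_map, ← Finset.sum_add_distrib,
    Finset.sum_congr rfl fun m hm => show _ = 3 * (R : ℤ) + 1 by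
      rw [Finset.mem_Ioc] at hm
      simp only [addRightEmbedding_apply]
      omega,
    Finset.sum_const, Int.card_Ioc, sub_zero, Int.toNat_natCast, nsmul_eq_mul]
  ring

lemma card_filter_sub_mem_hexFinset (R : ℕ) :
    #{p ∈ hexFinset R | p - (1, 0) ∈ hexFinset R} = 3 * R ^ 2 + R := by
  set F := {p ∈ hexFinset R | p - (1, 0) ∈ hexFinset R}
  have hcol_card : ∀ m ∈ Finset.Ioc (-(R : ℤ)) R, (#{p ∈ F | p.1 = m} : ℤ) =
      min (R : ℤ) (R - m) - max (-(R : ℤ) - 1) (-R - m) := by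
    intro m hm
    rw [Finset.mem_Ioc] at hm
    have hcol : {p ∈ F | p.1 = m} =
        (Finset.Ioc (max (-(R : ℤ) - 1) (-R - m)) (min (R : ℤ) (R - m))).map
          ⟨(m, ·), Prod.mk_right_injective m⟩ := by
      ext ⟨a, b⟩
      simp only [F, Finset.mem_filter, mem_hexFinset, Finset.mem_map, Finset.mem_Ioc,
        Function.Embedding.coeFn_mk, Prod.mk.injEq, Prod.fst_sub, Prod.snd_sub]
      constructor
      · rintro ⟨⟨⟨h1, h2, h3, h4, h5, h6⟩, h7, h8, h9, h10, h11, h12⟩, rfl⟩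
        exact ⟨b, by omega, rfl, rfl⟩
      · rintro ⟨b, hb, rfl, rfl⟩
        omega
    rw [hcol, Finset.card_map, Int.card_Ioc, Int.toNat_of_nonneg (by omega)]
  have hfst : MapsTo Prod.fst (F : Set (ℤ × ℤ)) (Finset.Ioc (-(R : ℤ)) R : Set ℤ) := by
    intro p hp
    simp only [F, Finset.coe_filter, mem_ofPred_eq, mem_hexFinset, Prod.fst_sub] at hp
    simp only [Finset.coe_Ioc, mem_Ioc]
    omega
  zify
  rw [Finset.card_eq_sum_card_fiberwise hfst, Nat.cast_sum, Finset.sum_congr rfl hcol_card,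
    sum_Ioc_columnEdgeCount]

theorem hexagonal_configuration_energy_general (R N : ℕ)
    (hN : N = 3 * R ^ 2 + 3 * R + 1)
    (S : Finset E2) (hS : (S : Set E2) = hex (R : ℝ) ∩ triLattice) :
    energyF VHR S =
      ((-6 * (N : ℝ) + 2 * Real.sqrt (12 * (N : ℝ) - 3) : ℝ) : EReal) := by
  have hS' : S = (hexFinset R).image latticePoint := by
    apply Finset.coe_injective
    rw [hS, hex_inter_triLattice, Finset.coe_image]
  have hsq : 12 * (N : ℝ) - 3 = (6 * R + 3) ^ 2 := by
    rw [hN]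
    push_cast
    ring
  rw [hS', energyF_VHR_image_latticePoint, card_filter_sub_mem_product,
    sum_unitNbrs_card_filter_sub_mem, card_filter_sub_mem_hexFinset, hsq,
    Real.sqrt_sq (by positivity), hN]
  congr 1
  push_cast
  ring

/-- the hexagonal configuration `h̄_R ∩ L` with `N = 3R² + 3R + 1` points
has Heitmann-Radin energy `-6N + 2√(12N - 3)`. -/
theorem hexagonal_configuration_energy (R N : ℕ) (hR : 1 ≤ R)
    (hN : N = 3 * R ^ 2 + 3 * R + 1)
    (S : Finset E2) (hS : (S : Set E2) = hex (R : ℝ) ∩ triLattice) :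
    energyF VHR S =
      ((-6 * (N : ℝ) + 2 * Real.sqrt (12 * (N : ℝ) - 3) : ℝ) : EReal) :=
  hexagonal_configuration_energy_general R N hN S hS
end
end

section
/- Let α ∈ (0,1] and β ∈ [1,∞) be constants such that any closed ball of radius β in ℝ² contains at most six points whose distance from the center and whose mutual distances are all ≥ α (hypothesis (H3)). Then β < α / (2 sin(π/7)); in particular β < √2 · α. -/
/-!
The vertices of a regular heptagon of circumradius `β` lie at distance `β` from its centre and
are pairwise at least a side `2β sin (π/7)` apart. Since `2 sin (π/7) < 2 sin (π/6) = 1`, they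
violate (H3) as soon as `α ≤ 2β sin (π/7)`. The bound by `√2 α` follows from
`2 sin (π/7) ≥ sin (2π/7) > sin (π/4) = √2 / 2`.
-/

open Set Real

noncomputable section

/-- Hypothesis (H3): every closed ball of radius `β` in the plane contains at most six
points whose distance from the center and whose pairwise mutual distances are all `≥ α`. -/
def H3cond (α β : ℝ) : Prop :=
  ∀ (c : E2) (T : Finset E2),
    (∀ x ∈ T, dist x c ≤ β) → (∀ x ∈ T, α ≤ dist x c) →
    (∀ x ∈ T, ∀ y ∈ T, x ≠ y → α ≤ dist x y) → T.card ≤ 6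

open Complex in
theorem Complex.norm_exp_I_mul_ofReal_sub_exp_I_mul_ofReal (a b : ℝ) :
    ‖exp (I * a) - exp (I * b)‖ = |2 * Real.sin ((a - b) / 2)| := by
  have : exp (I * a) - exp (I * b) = exp (I * b) * (exp (I * ↑(a - b)) - 1) := by
    rw [mul_sub, ← Complex.exp_add]; push_cast; ring_nf
  rw [this, norm_mul, norm_exp_I_mul_ofReal, one_mul, norm_exp_I_mul_ofReal_sub_one,
    Real.norm_eq_abs]

namespace Real

theorem sin_pi_div_natCast_pos {n : ℕ} (hn : 1 < n) : 0 < sin (π / n) :=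
  sin_pos_of_pos_of_lt_pi (by positivity) (div_lt_self pi_pos (by exact_mod_cast hn))

theorem sin_pi_div_seven_pos : 0 < sin (π / 7) := by
  simpa using sin_pi_div_natCast_pos (n := 7) (by norm_num)

theorem sin_le_sin_of_le_of_le_pi_sub {a x : ℝ} (ha : 0 ≤ a) (hax : a ≤ x) (hxa : x ≤ π - a) :
    sin a ≤ sin x := by
  rcases le_total x (π / 2) with hx | hx
  · exact sin_le_sin_of_le_of_le_pi_div_two (by linarith [pi_pos]) hx hax
  · rw [← sin_pi_sub x]
    exact sin_le_sin_of_le_of_le_pi_div_two (by linarith [pi_pos]) (by linarith) (by linarith)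

theorem sin_pi_div_le_sin_pi_mul_div {m n : ℕ} (hm : 0 < m) (hmn : m < n) :
    sin (π / n) ≤ sin (π * m / n) := by
  have hn : (0 : ℝ) < n := by exact_mod_cast hm.trans hmn
  have hm' : (1 : ℝ) ≤ m := by exact_mod_cast hm
  have hmn' : (m : ℝ) + 1 ≤ n := by exact_mod_cast hmn
  apply sin_le_sin_of_le_of_le_pi_sub (by positivity)
  · rw [div_le_div_iff_of_pos_right hn]
    nlinarith [pi_pos]
  · rw [le_sub_iff_add_le, ← add_div, div_le_iff₀ hn]
    nlinarith [pi_pos]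

theorem two_mul_sin_pi_div_seven_lt_one : 2 * sin (π / 7) < 1 := by
  have : sin (π / 7) < sin (π / 6) :=
    sin_lt_sin_of_lt_of_le_pi_div_two (by linarith [pi_pos]) (by linarith [pi_pos])
      (by linarith [pi_pos])
  rw [sin_pi_div_six] at this
  linarith

theorem one_lt_sqrt_two_mul_two_mul_sin_pi_div_seven : 1 < √2 * (2 * sin (π / 7)) := by
  have hdouble : sin (2 * (π / 7)) ≤ 2 * sin (π / 7) := by
    rw [sin_two_mul]
    nlinarith [cos_le_one (π / 7), sin_pi_div_seven_pos]
  have hquarter : sin (π / 4) < sin (2 * (π / 7)) :=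
    sin_lt_sin_of_lt_of_le_pi_div_two (by linarith [pi_pos]) (by linarith [pi_pos])
      (by linarith [pi_pos])
  rw [sin_pi_div_four] at hquarter
  have hsqrt : √2 * √2 = 2 := mul_self_sqrt (by norm_num)
  nlinarith [sqrt_nonneg 2]

end Real

open Complex in
def regularPolygon (n : ℕ) (r : ℝ) (k : Fin n) : ℂ := r * exp (I * (2 * π * k / n : ℝ))

section regularPolygon

variable {n : ℕ} {r : ℝ}

theorem norm_regularPolygon (hr : 0 ≤ r) (k : Fin n) : ‖regularPolygon n r k‖ = r := by
  rw [regularPolygon, norm_mul, Complex.norm_exp_I_mul_ofReal, mul_one, Complex.norm_real,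
    Real.norm_of_nonneg hr]

theorem dist_regularPolygon (j k : Fin n) :
    dist (regularPolygon n r j) (regularPolygon n r k) = |2 * r * sin (π * (j - k) / n)| := by
  rw [dist_eq_norm, regularPolygon, regularPolygon, ← mul_sub, norm_mul,
    Complex.norm_exp_I_mul_ofReal_sub_exp_I_mul_ofReal, Complex.norm_real, Real.norm_eq_abs,
    ← abs_mul]
  ring_nf

theorem le_dist_regularPolygon (hr : 0 ≤ r) {j k : Fin n} (hjk : j ≠ k) :
    2 * r * sin (π / n) ≤ dist (regularPolygon n r j) (regularPolygon n r k) := by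
  wlog hkj : k < j generalizing j k
  · rw [dist_comm]
    exact this hjk.symm (lt_of_le_of_ne (not_lt.1 hkj) hjk)
  have hsin := sin_pi_div_le_sin_pi_mul_div (Nat.sub_pos_of_lt hkj) (Nat.sub_lt_of_lt j.isLt)
  rw [Nat.cast_sub hkj.le] at hsin
  rw [dist_regularPolygon]
  refine le_trans ?_ (le_abs_self _)
  gcongr

theorem regularPolygon_injective (hr : 0 < r) : Function.Injective (regularPolygon n r) := by
  intro j k hjk
  by_contra hne
  have hsin := sin_pi_div_natCast_pos (n := n) (by omega)
  have := le_dist_regularPolygon hr.le hne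
  rw [hjk, dist_self] at this
  nlinarith

end regularPolygon

theorem exists_finset_regularPolygon (n : ℕ) {r : ℝ} (hr : 0 < r) :
    ∃ T : Finset E2, T.card = n ∧ (∀ x ∈ T, ‖x‖ = r) ∧
      ∀ x ∈ T, ∀ y ∈ T, x ≠ y → 2 * r * sin (π / n) ≤ dist x y := by
  classical
  let f := Complex.orthonormalBasisOneI.repr
  refine ⟨Finset.univ.image (f ∘ regularPolygon n r), ?_, ?_, ?_⟩
  · rw [Finset.card_image_of_injective _ (f.injective.comp (regularPolygon_injective hr)),
      Finset.card_univ, Fintype.card_fin]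
  · simp [f, norm_regularPolygon hr.le]
  · simp only [Finset.mem_image, Finset.mem_univ, true_and, Function.comp_apply]
    rintro _ ⟨j, rfl⟩ _ ⟨k, rfl⟩ hne
    rw [f.dist_map]
    exact le_dist_regularPolygon hr.le fun h => hne (h ▸ rfl)

theorem H3cond.lt_div_two_mul_sin {α β : ℝ} (h : H3cond α β) (hα : 0 < α) :
    β < α / (2 * sin (π / 7)) := by
  have hsin := sin_pi_div_seven_pos
  by_contra! hle
  have hside : α ≤ 2 * β * sin (π / 7) := by
    rw [div_le_iff₀ (by positivity)] at hle
    linarith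
  have hβ : 0 < β := lt_of_lt_of_le (by positivity) hle
  have hαβ : α ≤ β := by nlinarith [two_mul_sin_pi_div_seven_lt_one]
  obtain ⟨T, hcard, hnorm, hdist⟩ := exists_finset_regularPolygon 7 hβ
  have := h 0 T (fun x hx => by rw [dist_zero_right, hnorm x hx])
    (fun x hx => by rw [dist_zero_right, hnorm x hx]; exact hαβ)
    (fun x hx y hy hxy => hside.trans (hdist x hx y hy hxy))
  omega

theorem beta_lt_of_H3_general (α β : ℝ) (hα : α ∈ Set.Ioc (0 : ℝ) 1)
    (h3 : H3cond α β) :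
    β < α / (2 * Real.sin (Real.pi / 7)) ∧ β < Real.sqrt 2 * α := by
  have hβ := h3.lt_div_two_mul_sin hα.1
  refine ⟨hβ, hβ.trans_le ?_⟩
  rw [div_le_iff₀ (by linarith [sin_pi_div_seven_pos]), mul_assoc]
  nlinarith [one_lt_sqrt_two_mul_two_mul_sin_pi_div_seven, hα.1]

/-- hypothesis (H3) forces `β < α / (2 sin(π/7))`, and in particular
`β < √2 · α`. -/
theorem beta_lt_of_H3 (α β : ℝ) (hα : α ∈ Set.Ioc (0 : ℝ) 1) (hβ : 1 ≤ β)
    (h3 : H3cond α β) :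
    β < α / (2 * Real.sin (Real.pi / 7)) ∧ β < Real.sqrt 2 * α :=
  beta_lt_of_H3_general α β hα h3
end
end

section
/- Let α ∈ (0,1] and β ∈ [1,∞) satisfy hypothesis (H3), and let S ⊂ ℝ² be a finite set whose points have pairwise distances ≥ α. If x, y ∈ S satisfy |x − y| ≤ β, then the midpoint m = (x+y)/2 belongs to both truncated Voronoi cells V_trunc(x) and V_trunc(y); in particular V_trunc(x) ∩ V_trunc(y) ≠ ∅. -/
/-!
The eight neighbours of the origin in the lattice `αℤ²` are pairwise `α`-separated and lie in the
annulus `α ≤ |·| ≤ √2 α`, so (H3) forces `β < √2 α`. Hence `|x - y|² < 2α²`, and for every other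
`z ∈ S` Apollonius's theorem with `|z - x|, |z - y| ≥ α` gives `|z - m| ≥ |x - y| / 2 = |x - m|`;
moreover `|x - m| < α / √2 ≤ 1`.
-/

open Set Metric

noncomputable section

/-- The Voronoi cell of `x` with respect to the set `S`. -/
def vor (S : Set E2) (x : E2) : Set E2 :=
  {y | ∀ z ∈ S, z ≠ x → dist y x ≤ dist y z}

/-- The truncated Voronoi cell `V_trunc(x) = V(x) ∩ B̄₁(x)`. -/
def vtrunc (S : Set E2) (x : E2) : Set E2 :=
  vor S x ∩ closedBall x 1

open EuclideanGeometry in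
lemma half_dist_le_dist_midpoint {V P : Type*} [NormedAddCommGroup V] [InnerProductSpace ℝ V]
    [MetricSpace P] [NormedAddTorsor V P] {a b c : P} {r : ℝ} (hr : 0 ≤ r)
    (hab : r ≤ dist a b) (hac : r ≤ dist a c) (hbc : dist b c ^ 2 ≤ 2 * r ^ 2) :
    dist b c / 2 ≤ dist a (midpoint ℝ b c) := by
  have apollonius := dist_sq_add_dist_sq_eq_two_mul_dist_midpoint_sq_add_half_dist_sq a b c
  refine (pow_le_pow_iff_left₀ (by positivity) dist_nonneg two_ne_zero).1 ?_
  nlinarith [mul_le_mul hab hab hr dist_nonneg, mul_le_mul hac hac hr dist_nonneg]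

def latticePt (α : ℝ) (p : ℤ × ℤ) : E2 := !₂[α * p.1, α * p.2]

lemma dist_latticePt_sq (α : ℝ) (p q : ℤ × ℤ) :
    dist (latticePt α p) (latticePt α q) ^ 2 =
      α ^ 2 * (((p.1 - q.1) ^ 2 + (p.2 - q.2) ^ 2 : ℤ) : ℝ) := by
  rw [EuclideanSpace.dist_eq, Real.sq_sqrt (by positivity), Fin.sum_univ_two]
  simp only [latticePt, Matrix.cons_val_zero, Matrix.cons_val_one, Real.dist_eq, sq_abs,
    Int.cast_add, Int.cast_pow, Int.cast_sub]
  ring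

lemma one_le_sq_add_sq_sub {p q : ℤ × ℤ} (hpq : p ≠ q) :
    1 ≤ (p.1 - q.1) ^ 2 + (p.2 - q.2) ^ 2 := by
  rcases p with ⟨a, b⟩; rcases q with ⟨c, d⟩
  by_cases hac : a = c
  · have hbd : b - d ≠ 0 := sub_ne_zero.2 fun h => hpq (by rw [hac, h])
    nlinarith [Int.one_le_abs hbd, sq_abs (b - d), sq_nonneg (a - c)]
  · nlinarith [Int.one_le_abs (sub_ne_zero.2 hac), sq_abs (a - c), sq_nonneg (b - d)]

def latticeNeighbours : Finset (ℤ × ℤ) := (Finset.Icc (-1) 1 ×ˢ Finset.Icc (-1) 1).erase 0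

lemma card_latticeNeighbours : latticeNeighbours.card = 8 := by decide

lemma sq_add_sq_le_two_of_mem_latticeNeighbours {p : ℤ × ℤ} (hp : p ∈ latticeNeighbours) :
    p.1 ^ 2 + p.2 ^ 2 ≤ 2 := by
  simp only [latticeNeighbours, Finset.mem_erase, Finset.mem_product, Finset.mem_Icc] at hp
  nlinarith

lemma le_dist_latticePt {α : ℝ} (hα : 0 ≤ α) {p q : ℤ × ℤ} (hpq : p ≠ q) :
    α ≤ dist (latticePt α p) (latticePt α q) := by
  refine (pow_le_pow_iff_left₀ hα dist_nonneg two_ne_zero).1 ?_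
  rw [dist_latticePt_sq]
  have : (1 : ℝ) ≤ (((p.1 - q.1) ^ 2 + (p.2 - q.2) ^ 2 : ℤ) : ℝ) := by
    exact_mod_cast one_le_sq_add_sq_sub hpq
  nlinarith [sq_nonneg α]

lemma H3cond.sq_lt_two_mul_sq {α β : ℝ} (h3 : H3cond α β) (hα : 0 < α) (hβ : 0 ≤ β) :
    β ^ 2 < 2 * α ^ 2 := by
  by_contra! hβα
  have hinj : Function.Injective (latticePt α) := fun p q hpq => by
    by_contra hne
    have := le_dist_latticePt hα.le hne
    rw [hpq, dist_self] at this
    linarith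
  have hcard := h3 (latticePt α 0) (latticeNeighbours.image (latticePt α)) ?_ ?_ ?_
  · rw [Finset.card_image_of_injective _ hinj, card_latticeNeighbours] at hcard
    omega
  all_goals simp only [Finset.forall_mem_image]
  · intro p hp
    refine (pow_le_pow_iff_left₀ dist_nonneg hβ two_ne_zero).1 ?_
    have : (p.1 : ℝ) ^ 2 + (p.2 : ℝ) ^ 2 ≤ 2 := by
      exact_mod_cast sq_add_sq_le_two_of_mem_latticeNeighbours hp
    rw [dist_latticePt_sq, Prod.fst_zero, Prod.snd_zero]
    push_cast
    nlinarith [sq_nonneg α]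
  · intro p hp
    exact le_dist_latticePt hα.le (Finset.ne_of_mem_erase hp)
  · intro p _ q _ hpq
    exact le_dist_latticePt hα.le fun h => hpq (h ▸ rfl)

lemma midpoint_mem_vtrunc_left {S : Set E2} {r : ℝ} (hr₀ : 0 ≤ r) (hr₁ : r ≤ 1)
    (hsep : ∀ x ∈ S, ∀ y ∈ S, x ≠ y → r ≤ dist x y) {x y : E2} (hx : x ∈ S) (hy : y ∈ S)
    (hxy : dist x y ^ 2 ≤ 2 * r ^ 2) :
    midpoint ℝ x y ∈ vtrunc S x := by
  have hmx : dist (midpoint ℝ x y) x = dist x y / 2 := by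
    rw [dist_midpoint_left, Real.norm_two, div_eq_inv_mul]
  refine ⟨fun z hz hzx => ?_, ?_⟩
  · rw [hmx, dist_comm _ z]
    by_cases hzy : z = y
    · rw [hzy, dist_right_midpoint, Real.norm_two, div_eq_inv_mul]
    · exact half_dist_le_dist_midpoint hr₀ (hsep z hz x hx hzx) (hsep z hz y hy hzy) hxy
  · rw [mem_closedBall, hmx]
    nlinarith [dist_nonneg (x := x) (y := y)]

theorem midpoint_mem_vtrunc_general (α β : ℝ) (hα : α ∈ Set.Ioc (0 : ℝ) 1)
    (h3 : H3cond α β) (S : Finset E2)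
    (hsep : ∀ x ∈ S, ∀ y ∈ S, x ≠ y → α ≤ dist x y)
    (x y : E2) (hx : x ∈ S) (hy : y ∈ S) (hxy : dist x y ≤ β) :
    midpoint ℝ x y ∈ vtrunc (S : Set E2) x ∧ midpoint ℝ x y ∈ vtrunc (S : Set E2) y ∧
      (vtrunc (S : Set E2) x ∩ vtrunc (S : Set E2) y).Nonempty := by
  obtain ⟨hα₀, hα₁⟩ := hα
  have hβ₀ : 0 ≤ β := dist_nonneg.trans hxy
  have hd : dist x y ^ 2 ≤ 2 * α ^ 2 :=
    (pow_le_pow_left₀ dist_nonneg hxy 2).trans (h3.sq_lt_two_mul_sq hα₀ hβ₀).le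
  have hmx := midpoint_mem_vtrunc_left hα₀.le hα₁ hsep hx hy hd
  have hmy : midpoint ℝ x y ∈ vtrunc (S : Set E2) y := by
    rw [midpoint_comm]
    exact midpoint_mem_vtrunc_left hα₀.le hα₁ hsep hy hx (by rwa [dist_comm])
  exact ⟨hmx, hmy, _, hmx, hmy⟩

/-- if `|x - y| ≤ β`, the midpoint of `x` and `y` lies in both truncated
Voronoi cells; in particular they intersect. -/
theorem midpoint_mem_vtrunc (α β : ℝ) (hα : α ∈ Set.Ioc (0 : ℝ) 1) (hβ : 1 ≤ β)
    (h3 : H3cond α β) (S : Finset E2)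
    (hsep : ∀ x ∈ S, ∀ y ∈ S, x ≠ y → α ≤ dist x y)
    (x y : E2) (hx : x ∈ S) (hy : y ∈ S) (hxy : dist x y ≤ β) :
    midpoint ℝ x y ∈ vtrunc (S : Set E2) x ∧ midpoint ℝ x y ∈ vtrunc (S : Set E2) y ∧
      (vtrunc (S : Set E2) x ∩ vtrunc (S : Set E2) y).Nonempty :=
  midpoint_mem_vtrunc_general α β hα h3 S hsep x y hx hy hxy
end
end

section
/- There exists ε₀ > 0 such that for all ε ∈ (0, ε₀] the following holds: let S ⊂ ℝ² be a finite set with pairwise distances ≥ 1 − ε, and suppose x ∈ S has six points of S at distance in [1−ε, 1+ε] from x. Then the boundary of the truncated Voronoi cell of x does not meet the boundary of Ω = ⋃_{y ∈ S} V_trunc(y), i.e. ∂Ω ∩ ∂V_trunc(x) = ∅. -/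
/-!
If the Voronoi cell of `x` contained a point `z` with `‖z - x‖ > 0.92`, then `z - x` and the six
vectors from `x` to its neighbours would be seven plane vectors with pairwise angles at least
`9/10`: the Voronoi inequality and `ε ≤ 1/100` bound all their cosines by `11/20 < cos (9/10)`.
Sorting their arguments around the circle shows `7 · 9/10 ≤ 2π`, which is false. So the truncated
cell, and with it its frontier, lies in the ball of radius `0.92` about `x`, while the open unit
ball about `x` lies in `Ω` because every point belongs to the cell of a nearest point of `S`.
Hence the frontier of the cell lies in the interior of `Ω`, which the frontier of `Ω` avoids.
-/

open Set Metric
open scoped Classical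

noncomputable section

/-- The neighbours of `x` in `S`: points of `S \ {x}` at distance in `[1-ε, 1+ε]`. -/
def neighbors (S : Finset E2) (ε : ℝ) (x : E2) : Finset E2 :=
  (S.erase x).filter (fun y => dist x y ∈ Set.Icc (1 - ε) (1 + ε))

open Real InnerProductGeometry Finset
open scoped RealInnerProductSpace EuclideanSpace

theorem Real.Angle.abs_toReal_coe_eq_min {d : ℝ} (hd : |d| ≤ 2 * π) :
    |(d : Real.Angle).toReal| = min |d| (2 * π - |d|) := by
  have hπ := pi_pos
  rw [abs_le] at hd
  rcases le_or_gt d (-π) with h | h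
  · rw [Real.Angle.toReal_coe_eq_self_add_two_pi_iff.2 ⟨by linarith, h⟩,
      abs_of_nonneg (by linarith), abs_of_neg (by linarith), min_eq_right (by linarith)]
    ring
  rcases le_or_gt d π with h' | h'
  · rw [Real.Angle.toReal_coe_eq_self_iff.2 ⟨h, h'⟩, min_eq_left]
    linarith [abs_le.2 ⟨h.le, h'⟩]
  · rw [Real.Angle.toReal_coe_eq_self_sub_two_pi_iff.2 ⟨h', by linarith⟩,
      abs_of_nonpos (by linarith), abs_of_pos (by linarith), min_eq_right (by linarith)]
    ring

theorem card_mul_le_two_pi_of_circular_sep {n : ℕ} {δ : ℝ} (hδ : δ ≤ 2 * π) (t : Fin n → ℝ)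
    (hsep : ∀ i j, i ≠ j → δ ≤ |t i - t j| ∧ |t i - t j| ≤ 2 * π - δ) :
    n * δ ≤ 2 * π := by
  rcases n with _ | m
  · simp [pi_pos.le]
  set s := t ∘ Tuple.sort t
  have hs_mono : Monotone s := Tuple.monotone_sort t
  have hs_sep : ∀ i j, i ≠ j → δ ≤ |s i - s j| ∧ |s i - s j| ≤ 2 * π - δ :=
    fun i j hij => hsep _ _ ((Tuple.sort t).injective.ne hij)
  have hgap : ∀ i j, i < j → δ ≤ s j - s i := fun i j hij => by
    simpa [abs_of_nonneg (sub_nonneg.2 (hs_mono hij.le))] using (hs_sep j i hij.ne').1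
  have hspread : ∀ k (hk : k ≤ m), k * δ ≤ s ⟨k, by omega⟩ - s 0 := by
    intro k
    induction k with
    | zero => simp
    | succ k ih =>
      intro hk
      have hstep := hgap ⟨k, by omega⟩ ⟨k + 1, by omega⟩ (by simp [Fin.lt_def])
      push_cast
      linarith [ih (by omega)]
  rcases Nat.eq_zero_or_pos m with rfl | hm
  · simpa using hδ
  · have hlast : s ⟨m, by omega⟩ - s 0 ≤ 2 * π - δ :=
      (le_abs_self _).trans (hs_sep _ _ (by simp [Fin.ext_iff]; omega)).2
    push_cast
    linarith [hspread m le_rfl]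

theorem cos_nine_tenths_gt : (11 / 20 : ℝ) < cos (9 / 10) := by
  have h := cos_bound (x := 9 / 10) (by rw [abs_of_nonneg] <;> norm_num)
  rw [abs_le, abs_of_nonneg (by norm_num : (0 : ℝ) ≤ 9 / 10)] at h
  nlinarith [h.1]

section InnerProductSpace

variable {V : Type*} [NormedAddCommGroup V] [InnerProductSpace ℝ V]

theorem card_mul_le_two_pi_of_le_angle [Fact (Module.finrank ℝ V = 2)] {T : Finset V} {δ : ℝ}
    (hδ : δ ≤ 2 * π) (hT0 : 0 ∉ T) (hT : (T : Set V).Pairwise fun v w => δ ≤ angle v w) :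
    #T * δ ≤ 2 * π := by
  obtain rfl | ⟨v₀, hv₀⟩ := T.eq_empty_or_nonempty
  · simp [pi_pos.le]
  have := FiniteDimensional.of_fact_finrank_eq_two (K := ℝ) (V := V)
  let o : Orientation ℝ V (Fin 2) := (Module.finBasisOfFinrankEq ℝ V Fact.out).orientation
  have hne : ∀ v ∈ T, v ≠ 0 := fun v hv h => hT0 (h ▸ hv)
  let θ : V → ℝ := fun v => (o.oangle v₀ v).toReal
  have hθ : ∀ v ∈ T, ∀ w ∈ T, v ≠ w → δ ≤ |θ v - θ w| ∧ |θ v - θ w| ≤ 2 * π - δ := by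
    intro v hv w hw hvw
    have hd : |θ v - θ w| ≤ 2 * π := by
      have hv := Real.Angle.toReal_mem_Ioc (o.oangle v₀ v)
      have hw := Real.Angle.toReal_mem_Ioc (o.oangle v₀ w)
      simp only [θ, abs_le]
      constructor <;> linarith [hv.1, hv.2, hw.1, hw.2]
    have hangle : angle w v = |((θ v - θ w : ℝ) : Real.Angle).toReal| := by
      rw [o.angle_eq_abs_oangle_toReal (hne w hw) (hne v hv),
        ← o.oangle_sub_left (hne v₀ hv₀) (hne w hw) (hne v hv)]
      simp [θ, Real.Angle.coe_sub, Real.Angle.coe_toReal]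
    have hmin : δ ≤ min |θ v - θ w| (2 * π - |θ v - θ w|) := by
      rw [← Real.Angle.abs_toReal_coe_eq_min hd, ← hangle]
      exact hT hw hv hvw.symm
    obtain ⟨h₁, h₂⟩ := le_min_iff.1 hmin
    exact ⟨h₁, by linarith⟩
  simpa using card_mul_le_two_pi_of_circular_sep hδ (fun i => θ (T.equivFin.symm i))
    fun i j hij => hθ _ (T.equivFin.symm i).2 _ (T.equivFin.symm j).2
      (by simpa [Subtype.ext_iff] using T.equivFin.symm.injective.ne hij)

theorem le_angle_of_inner_le_cos_mul {x y : V} {δ : ℝ} (hx : x ≠ 0) (hy : y ≠ 0) (hδ : δ ≤ π)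
    (h : ⟪x, y⟫ ≤ cos δ * (‖x‖ * ‖y‖)) : δ ≤ angle x y := by
  by_contra! hlt
  have hcos := cos_lt_cos_of_nonneg_of_le_pi (angle_nonneg x y) hδ hlt
  rw [cos_angle, lt_div_iff₀ (by positivity)] at hcos
  linarith

theorem nine_tenths_le_angle_of_inner_le {a b : V} (ha : a ≠ 0) (hb : b ≠ 0)
    (h : ⟪a, b⟫ ≤ 11 / 20 * (‖a‖ * ‖b‖)) : 9 / 10 ≤ angle a b :=
  le_angle_of_inner_le_cos_mul ha hb (by linarith [pi_gt_three])
    (h.trans (mul_le_mul_of_nonneg_right cos_nine_tenths_gt.le (by positivity)))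

theorem two_inner_sub_sub_le_of_dist_le {x y z : V} (h : dist z x ≤ dist z y) :
    2 * ⟪z - x, y - x⟫ ≤ ‖y - x‖ ^ 2 := by
  rw [dist_eq_norm, dist_eq_norm, ← sub_sub_sub_cancel_right z y x] at h
  have hsq := pow_le_pow_left₀ (norm_nonneg _) h 2
  linarith [norm_sub_sq_real (z - x) (y - x)]

theorem inner_le_mul_norm_mul_norm_of_two_inner_le {w a : V} {c : ℝ}
    (h : 2 * ⟪w, a⟫ ≤ ‖a‖ ^ 2) (ha : ‖a‖ ≤ 2 * c * ‖w‖) : ⟪w, a⟫ ≤ c * (‖w‖ * ‖a‖) := by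
  nlinarith [norm_nonneg a]

theorem inner_le_of_norm_mem_Icc_of_le_norm_sub {a b : V} {ε : ℝ} (hε : ε ≤ 1 / 100)
    (ha : ‖a‖ ∈ Icc (1 - ε) (1 + ε)) (hb : ‖b‖ ∈ Icc (1 - ε) (1 + ε)) (hab : 1 - ε ≤ ‖a - b‖) :
    ⟪a, b⟫ ≤ 11 / 20 * (‖a‖ * ‖b‖) := by
  obtain ⟨ha₁, ha₂⟩ := ha
  obtain ⟨hb₁, hb₂⟩ := hb
  have hpos : 0 < 1 - ε := by linarith
  have hprod : (1 - ε) ^ 2 ≤ ‖a‖ * ‖b‖ := by nlinarith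
  have hab_sq : (1 - ε) ^ 2 ≤ ‖a - b‖ ^ 2 := pow_le_pow_left₀ hpos.le hab 2
  rw [norm_sub_sq_real] at hab_sq
  nlinarith

end InnerProductSpace

theorem mem_neighbors {S : Finset E2} {ε : ℝ} {x y : E2} :
    y ∈ neighbors S ε x ↔ y ∈ S ∧ y ≠ x ∧ ‖y - x‖ ∈ Icc (1 - ε) (1 + ε) := by
  rw [neighbors, Finset.mem_filter, Finset.mem_erase, dist_comm, dist_eq_norm]
  tauto

theorem nine_tenths_le_angle_of_mem_vor {S : Finset E2} {ε : ℝ} (hε : ε ≤ 1 / 100) {x y z : E2}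
    (hz : z ∈ vor S x) (hzx : 92 / 100 < ‖z - x‖) (hy : y ∈ neighbors S ε x) :
    9 / 10 ≤ angle (z - x) (y - x) := by
  obtain ⟨hyS, hyx, -, hy₂⟩ := mem_neighbors.1 hy
  refine nine_tenths_le_angle_of_inner_le (norm_pos_iff.1 (by linarith)) (sub_ne_zero.2 hyx) ?_
  exact inner_le_mul_norm_mul_norm_of_two_inner_le
    (two_inner_sub_sub_le_of_dist_le (hz y hyS hyx)) (by linarith)

theorem nine_tenths_le_angle_of_mem_neighbors {S : Finset E2} {ε : ℝ} (hε : ε ≤ 1 / 100)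
    (hsep : ∀ x ∈ S, ∀ y ∈ S, x ≠ y → 1 - ε ≤ dist x y) {x y y' : E2}
    (hy : y ∈ neighbors S ε x) (hy' : y' ∈ neighbors S ε x) (hne : y ≠ y') :
    9 / 10 ≤ angle (y - x) (y' - x) := by
  obtain ⟨hyS, hyx, hy_norm⟩ := mem_neighbors.1 hy
  obtain ⟨hy'S, hy'x, hy'_norm⟩ := mem_neighbors.1 hy'
  refine nine_tenths_le_angle_of_inner_le (sub_ne_zero.2 hyx) (sub_ne_zero.2 hy'x) ?_
  refine inner_le_of_norm_mem_Icc_of_le_norm_sub hε hy_norm hy'_norm ?_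
  rw [sub_sub_sub_cancel_right, ← dist_eq_norm]
  exact hsep y hyS y' hy'S hne

theorem vor_subset_closedBall_of_card_neighbors_eq_six {S : Finset E2} {ε : ℝ}
    (hε : ε ≤ 1 / 100) (hsep : ∀ x ∈ S, ∀ y ∈ S, x ≠ y → 1 - ε ≤ dist x y) {x : E2}
    (hx : #(neighbors S ε x) = 6) : vor (S : Set E2) x ⊆ closedBall x (92 / 100) := by
  intro z hz
  by_contra hfar
  rw [mem_closedBall, dist_eq_norm, not_le] at hfar
  set N := neighbors S ε x
  have hzN : z - x ∉ N.image (· - x) := by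
    rintro hmem
    obtain ⟨y, hy, hyz⟩ := Finset.mem_image.1 hmem
    have := nine_tenths_le_angle_of_mem_vor hε hz hfar hy
    rw [← hyz, angle_self (sub_ne_zero.2 (mem_neighbors.1 hy).2.1)] at this
    norm_num at this
  have hcard : #(insert (z - x) (N.image (· - x))) = 7 := by
    rw [Finset.card_insert_of_notMem hzN, Finset.card_image_of_injective _ (sub_left_injective), hx]
  have hzero : (0 : E2) ∉ insert (z - x) (N.image (· - x)) := by
    simp only [Finset.mem_insert, Finset.mem_image, sub_eq_zero, exists_eq_right]
    rintro (h | h)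
    · rw [← h, norm_zero] at hfar
      norm_num at hfar
    · exact (mem_neighbors.1 h).2.1 rfl
  have hpair : (↑(insert (z - x) (N.image (· - x))) : Set E2).Pairwise
      fun v w => 9 / 10 ≤ angle v w := by
    rw [Finset.coe_insert, Set.pairwise_insert, Finset.coe_image]
    refine ⟨?_, ?_⟩
    · rintro _ ⟨y, hy, rfl⟩ _ ⟨y', hy', rfl⟩ hne
      exact nine_tenths_le_angle_of_mem_neighbors hε hsep hy hy' (by rintro rfl; exact hne rfl)
    · rintro _ ⟨y, hy, rfl⟩ -
      have := nine_tenths_le_angle_of_mem_vor hε hz hfar hy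
      exact ⟨this, angle_comm (z - x) _ ▸ this⟩
  have hpack := card_mul_le_two_pi_of_le_angle (by linarith [pi_gt_three]) hzero hpair
  rw [hcard] at hpack
  linarith [pi_lt_d2]

theorem ball_subset_iUnion_vtrunc {S : Finset E2} {x : E2} (hx : x ∈ S) :
    ball x 1 ⊆ ⋃ y ∈ (S : Set E2), vtrunc S y := by
  intro p hp
  obtain ⟨m, hm, hmin⟩ := S.exists_min_image (dist p) ⟨x, hx⟩
  exact mem_iUnion₂.2 ⟨m, hm, fun q hq _ => hmin q hq, (hmin x hx).trans (mem_ball.1 hp).le⟩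

/-- for sufficiently small `ε > 0`, if a point `x` of a `(1-ε)`-separated
finite set `S` has six neighbours, then the boundary of its truncated Voronoi cell does
not meet the boundary of `Ω = ⋃_{y ∈ S} V_trunc(y)`. -/
theorem interior_cell_avoids_boundary :
    ∃ ε₀ : ℝ, 0 < ε₀ ∧ ∀ ε : ℝ, 0 < ε → ε ≤ ε₀ →
      ∀ S : Finset E2, (∀ x ∈ S, ∀ y ∈ S, x ≠ y → 1 - ε ≤ dist x y) →
        ∀ x ∈ S, (neighbors S ε x).card = 6 →
          frontier (⋃ y ∈ (S : Set E2), vtrunc (S : Set E2) y) ∩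
              frontier (vtrunc (S : Set E2) x) = ∅ := by
  refine ⟨1 / 100, by norm_num, fun ε _ hε S hsep x hx hcard => ?_⟩
  have hcell : vtrunc (S : Set E2) x ⊆ closedBall x (92 / 100) :=
    inter_subset_left.trans (vor_subset_closedBall_of_card_neighbors_eq_six hε hsep hcard)
  have hfrontier : frontier (vtrunc (S : Set E2) x) ⊆ interior (⋃ y ∈ (S : Set E2), vtrunc S y) :=
    calc frontier (vtrunc (S : Set E2) x)
        ⊆ closedBall x (92 / 100) := frontier_subset_closure.trans
          (closure_minimal hcell isClosed_closedBall)
      _ ⊆ ball x 1 := closedBall_subset_ball (by norm_num)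
      _ ⊆ _ := interior_maximal (ball_subset_iUnion_vtrunc hx) isOpen_ball
  exact eq_empty_of_forall_notMem fun p hp => hp.1.2 (hfrontier hp.2)
end
end

section
/- There exists ε₀ > 0 such that for all ε ∈ (0, ε₀] the following holds: let S ⊂ ℝ² be a finite set with pairwise distances ≥ 1 − ε that is connected with parameter 1 + ε (any two points of S are joined by a chain in S with consecutive distances ≤ 1 + ε). Let ∂S = {x ∈ S : x has fewer than six points of S at distance in [1−ε, 1+ε]}. Then diam S ≤ π · #∂S. -/
/-!
Measure along the line through two points `a`, `b` of `S` and cut the plane into slabs of width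
`1 + ε` orthogonal to it; chain-connectedness makes each of the `K + 1 = ⌊|ab| / (1 + ε)⌋ + 1`
slabs between `a` and `b` nonempty. Six pairwise separated neighbours of a point cannot fit into
five sectors of opening less than `60°`, so a point with six neighbours has a neighbour in each
open upper quadrant around it. Hence if the highest point of a slab is not a boundary atom, the
slab is not the first one and the highest points of both adjacent slabs lie strictly above it. So
the first slab and one of any two consecutive slabs have a boundary atom on top, which gives
`K / 2 + 1` boundary atoms and `|ab| < 2 (1 + ε) #∂S ≤ π #∂S`.
-/

open Set Metric
open scoped Classical

noncomputable section

/-- The boundary atoms: points of `S` with fewer than six neighbours. -/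
def bdryAtoms (S : Finset E2) (ε : ℝ) : Finset E2 :=
  S.filter (fun x => (neighbors S ε x).card < 6)

/-- `S` is connected with parameter `β`: any two of its points are joined by a chain of
points of `S` with consecutive distances `≤ β`. -/
def ChainConnected (β : ℝ) (S : Finset E2) : Prop :=
  ∀ x ∈ S, ∀ y ∈ S, ∃ (n : ℕ) (c : ℕ → E2),
    c 0 = x ∧ c n = y ∧ (∀ i ≤ n, c i ∈ S) ∧ ∀ i < n, dist (c (i + 1)) (c i) ≤ β

open ComplexConjugate Complex Finset
open scoped InnerProductSpace

section ConeGeometry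

variable {V : Type*} [NormedAddCommGroup V] [InnerProductSpace ℝ V]

theorem mul_norm_mul_norm_le_inner_of_mem_hull_pair {g h d d' : V} {c : ℝ} (hgh : ‖g‖ = ‖h‖)
    (hc : 0 ≤ c) (hcos : c * ‖g‖ ^ 2 ≤ ⟪g, h⟫_ℝ)
    (hd : d ∈ PointedCone.hull ℝ {g, h}) (hd' : d' ∈ PointedCone.hull ℝ {g, h}) :
    c * (‖d‖ * ‖d'‖) ≤ ⟪d, d'⟫_ℝ := by
  obtain ⟨⟨s, hs⟩, ⟨t, ht⟩, rfl⟩ := Submodule.mem_span_pair.1 hd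
  obtain ⟨⟨s', hs'⟩, ⟨t', ht'⟩, rfl⟩ := Submodule.mem_span_pair.1 hd'
  simp only [Nonneg.mk_smul]
  have hnorm : ∀ a b : ℝ, 0 ≤ a → 0 ≤ b → ‖a • g + b • h‖ ≤ (a + b) * ‖g‖ := fun a b ha hb =>
    calc _ ≤ ‖a • g‖ + ‖b • h‖ := norm_add_le _ _
      _ = (a + b) * ‖g‖ := by
        rw [norm_smul, norm_smul, ← hgh, Real.norm_of_nonneg ha, Real.norm_of_nonneg hb, add_mul]
  have hgh_le : ⟪g, h⟫_ℝ ≤ ‖g‖ ^ 2 := (real_inner_le_norm g h).trans_eq (by rw [← hgh, sq])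
  have hinner : ⟪s • g + t • h, s' • g + t' • h⟫_ℝ =
      (s * s' + t * t') * ‖g‖ ^ 2 + (s * t' + t * s') * ⟪g, h⟫_ℝ := by
    simp only [inner_add_left, inner_add_right, real_inner_smul_left, real_inner_smul_right,
      real_inner_self_eq_norm_sq, real_inner_comm g h, ← hgh]
    ring
  calc c * (‖s • g + t • h‖ * ‖s' • g + t' • h‖)
      ≤ c * ((s + t) * ‖g‖ * ((s' + t') * ‖g‖)) := by
        gcongr; exacts [hnorm s t hs ht, hnorm s' t' hs' ht']
    _ = (s + t) * (s' + t') * (c * ‖g‖ ^ 2) := by ring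
    _ ≤ (s + t) * (s' + t') * ⟪g, h⟫_ℝ := by gcongr
    _ ≤ _ := by
      rw [hinner]
      nlinarith [mul_nonneg (add_nonneg (mul_nonneg hs hs') (mul_nonneg ht ht'))
        (sub_nonneg.2 hgh_le)]

theorem norm_sub_lt_of_mem_hull_pair {g h d d' : V} {ε : ℝ} (hgh : ‖g‖ = ‖h‖)
    (hcos : 8 / 15 * ‖g‖ ^ 2 ≤ ⟪g, h⟫_ℝ) (hε : ε ≤ 1 / 100)
    (hd : d ∈ PointedCone.hull ℝ {g, h}) (hd' : d' ∈ PointedCone.hull ℝ {g, h})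
    (hnd : ‖d‖ ∈ Set.Icc (1 - ε) (1 + ε)) (hnd' : ‖d'‖ ∈ Set.Icc (1 - ε) (1 + ε)) :
    ‖d - d'‖ < 1 - ε := by
  have hinner := mul_norm_mul_norm_le_inner_of_mem_hull_pair hgh (by norm_num) hcos hd hd'
  obtain ⟨h₁, h₂⟩ := hnd
  obtain ⟨h₁', h₂'⟩ := hnd'
  refine lt_of_pow_lt_pow_left₀ 2 (by linarith) ?_
  rw [norm_sub_sq_real]
  nlinarith [mul_nonneg (sub_nonneg.2 h₂) (sub_nonneg.2 h₂'),
    mul_nonneg (sub_nonneg.2 h₁) (sub_nonneg.2 h₂'),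
    mul_nonneg (sub_nonneg.2 h₁') (sub_nonneg.2 h₂)]

end ConeGeometry

theorem Complex.mem_hull_pair_of_im_conj_mul_nonneg {g h d : ℂ} (hgh : 0 < (conj g * h).im)
    (hg : 0 ≤ (conj g * d).im) (hh : 0 ≤ (conj d * h).im) : d ∈ PointedCone.hull ℝ {g, h} := by
  have cramer : (conj d * h).im • g + (conj g * d).im • h = (conj g * h).im • d := by
    apply Complex.ext <;> simp [mul_im] <;> ring
  refine Submodule.mem_span_pair.2 ⟨⟨_, div_nonneg hh hgh.le⟩, ⟨_, div_nonneg hg hgh.le⟩, ?_⟩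
  rw [Nonneg.mk_smul, Nonneg.mk_smul, div_eq_inv_mul, div_eq_inv_mul, mul_smul, mul_smul,
    ← smul_add, cramer, smul_smul, inv_mul_cancel₀ hgh.ne', one_smul]

theorem exists_isometry_complex (a b : E2) :
    ∃ f : E2 → ℂ, Isometry f ∧ f a = 0 ∧ f b = dist a b := by
  let e := Complex.orthonormalBasisOneI.repr.symm
  let u := exp (↑(-arg (e b - e a)) * I)
  refine ⟨fun z => (e z - e a) * u, Isometry.of_dist_eq fun y z => ?_, by simp, ?_⟩
  · rw [dist_eq_norm, ← sub_mul, norm_mul, sub_sub_sub_cancel_right, ← dist_eq_norm, e.dist_map,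
      norm_exp_ofReal_mul_I, mul_one]
  · dsimp only
    nth_rewrite 1 [← norm_mul_exp_arg_mul_I (e b - e a)]
    rw [mul_assoc, ← exp_add, ofReal_neg, neg_mul, add_neg_cancel, exp_zero, mul_one,
      ← dist_eq_norm, e.dist_map, dist_comm]

/-- Rays of norm `25`, consecutive ones at angle at most `arccos (8 / 15) ≈ 57.8°`; the five
sectors they bound sweep counterclockwise from the negative real axis to the positive imaginary
axis, covering everything but the open second quadrant. -/
def sectorRay : Fin 6 → ℂ := ![-25, -15 - 20 * I, 7 - 24 * I, 24 - 7 * I, 20 + 15 * I, 25 * I]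

theorem norm_sectorRay (i : Fin 6) : ‖sectorRay i‖ = 25 := by
  rw [norm_eq_sqrt_sq_add_sq, Real.sqrt_eq_iff_mul_self_eq_of_pos (by norm_num)]
  fin_cases i <;> simp [sectorRay] <;> norm_num

theorem le_inner_sectorRay (i : Fin 5) :
    8 / 15 * ‖sectorRay i.castSucc‖ ^ 2 ≤ ⟪sectorRay i.castSucc, sectorRay i.succ⟫_ℝ := by
  rw [norm_sectorRay]
  fin_cases i <;> simp [sectorRay, Complex.inner] <;> norm_num

theorem exists_mem_sector {d : ℂ} (hd : ¬(d.re < 0 ∧ 0 < d.im)) :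
    ∃ i : Fin 5, d ∈ PointedCone.hull ℝ {sectorRay i.castSucc, sectorRay i.succ} := by
  have mem (i : Fin 5) : 0 ≤ (conj (sectorRay i.castSucc) * d).im →
      0 ≤ (conj d * sectorRay i.succ).im →
      d ∈ PointedCone.hull ℝ {sectorRay i.castSucc, sectorRay i.succ} :=
    mem_hull_pair_of_im_conj_mul_nonneg (by fin_cases i <;> simp [sectorRay] <;> norm_num)
  rw [not_and_or, not_lt, not_lt] at hd
  rcases le_or_gt (20 * d.re) (15 * d.im) with h₀ | h₀
  · rcases le_or_gt d.im 0 with h₁ | h₁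
    · exact ⟨0, mem 0 (by simp [sectorRay]; linarith) (by simp [sectorRay]; linarith)⟩
    · have : 0 ≤ d.re := hd.resolve_right h₁.not_ge
      exact ⟨4, mem 4 (by simp [sectorRay]; linarith) (by simp [sectorRay]; linarith)⟩
  rcases le_or_gt (24 * d.re + 7 * d.im) 0 with h₁ | h₁
  · exact ⟨1, mem 1 (by simp [sectorRay]; linarith) (by simp [sectorRay]; linarith)⟩
  rcases le_or_gt (7 * d.re + 24 * d.im) 0 with h₂ | h₂
  · exact ⟨2, mem 2 (by simp [sectorRay]; linarith) (by simp [sectorRay]; linarith)⟩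
  rcases le_or_gt (20 * d.im) (15 * d.re) with h₃ | h₃
  · exact ⟨3, mem 3 (by simp [sectorRay]; linarith) (by simp [sectorRay]; linarith)⟩
  · exact ⟨4, mem 4 (by simp [sectorRay]; linarith) (by simp [sectorRay]; linarith)⟩

theorem exists_re_neg_im_pos_of_six_le_card {ε : ℝ} (hε : ε ≤ 1 / 100) {V : Finset ℂ}
    (hV : 6 ≤ #V) (hnorm : ∀ v ∈ V, ‖v‖ ∈ Set.Icc (1 - ε) (1 + ε))
    (hsep : (V : Set ℂ).Pairwise fun v w => 1 - ε ≤ ‖v - w‖) :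
    ∃ v ∈ V, v.re < 0 ∧ 0 < v.im := by
  by_contra! hnot
  choose! sector hsector using fun v (hv : v ∈ V) =>
    exists_mem_sector fun h => (hnot v hv h.1).not_gt h.2
  obtain ⟨v, hv, w, hw, hvw, hsec⟩ := exists_ne_map_eq_of_card_lt_of_maps_to (s := V)
    (t := (univ : Finset (Fin 5))) (by simp only [card_univ, Fintype.card_fin]; omega)
    fun v _ => mem_coe.2 (mem_univ (sector v))
  refine (hsep hv hw hvw).not_gt (norm_sub_lt_of_mem_hull_pair (by simp only [norm_sectorRay])
    (le_inner_sectorRay _) hε (hsector v hv) ?_ (hnorm v hv) (hnorm w hw))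
  rw [hsec]
  exact hsector w hw

theorem exists_mem_re_le_im_lt_of_notMem_bdryAtoms {ε : ℝ} (hε : ε ≤ 1 / 100) {S : Finset E2}
    (hsep : ∀ x ∈ S, ∀ y ∈ S, x ≠ y → 1 - ε ≤ dist x y) {f : E2 → ℂ} (hf : Isometry f)
    {x : E2} (hxS : x ∈ S) (hx : x ∉ bdryAtoms S ε) :
    ∃ y ∈ S, (f x).re - (1 + ε) ≤ (f y).re ∧ (f y).re ≤ (f x).re ∧ (f x).im < (f y).im := by
  have h6 : 6 ≤ #(neighbors S ε x) := by simpa [bdryAtoms, hxS] using hx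
  have hnorm (y : E2) : ‖f y - f x‖ = dist x y := by rw [← dist_eq_norm, hf.dist_eq, dist_comm]
  have hinj : Function.Injective fun y => f y - f x := fun y z h =>
    hf.injective (sub_left_injective h)
  obtain ⟨_, hv, hre, him⟩ := exists_re_neg_im_pos_of_six_le_card hε
    (V := (neighbors S ε x).image fun y => f y - f x) (by rwa [card_image_of_injective _ hinj])
    (fun _ hv => by obtain ⟨y, hy, rfl⟩ := mem_image.1 hv; rw [hnorm]; exact (mem_filter.1 hy).2)
    (by
      simp only [coe_image]
      rintro _ ⟨y, hy, rfl⟩ _ ⟨z, hz, rfl⟩ hyz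
      rw [sub_sub_sub_cancel_right, ← dist_eq_norm, hf.dist_eq]
      exact hsep y (mem_erase.1 (mem_filter.1 hy).1).2 z (mem_erase.1 (mem_filter.1 hz).1).2
        fun h => hyz (h ▸ rfl))
  obtain ⟨y, hy, rfl⟩ := mem_image.1 hv
  obtain ⟨hyS, hyx⟩ := mem_filter.1 hy
  have hre_le : -(f y - f x).re ≤ 1 + ε := (neg_le_abs _).trans <| (abs_re_le_norm _).trans <| by
    rw [hnorm]; exact hyx.2
  simp only [sub_re, sub_im] at hre him hre_le
  exact ⟨y, (mem_erase.1 hyS).2, by linarith, by linarith, by linarith⟩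

theorem exists_mem_re_ge_im_lt_of_notMem_bdryAtoms {ε : ℝ} (hε : ε ≤ 1 / 100) {S : Finset E2}
    (hsep : ∀ x ∈ S, ∀ y ∈ S, x ≠ y → 1 - ε ≤ dist x y) {f : E2 → ℂ} (hf : Isometry f)
    {x : E2} (hxS : x ∈ S) (hx : x ∉ bdryAtoms S ε) :
    ∃ y ∈ S, (f x).re ≤ (f y).re ∧ (f y).re ≤ (f x).re + (1 + ε) ∧ (f x).im < (f y).im := by
  obtain ⟨y, hy, h₁, h₂, h₃⟩ := exists_mem_re_le_im_lt_of_notMem_bdryAtoms hε hsep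
    (isometry_neg.comp (Complex.isometry_conj.comp hf)) hxS hx
  simp only [Function.comp_apply, neg_re, neg_im, conj_re, conj_im, neg_neg] at h₁ h₂ h₃
  exact ⟨y, hy, by linarith, by linarith, h₃⟩

theorem Nat.floor_div_le_floor_div_add_one {R : Type*} [Field R] [LinearOrder R]
    [IsStrictOrderedRing R] [FloorSemiring R] {a b w : R} (hw : 0 < w) (h : a ≤ b + w) :
    ⌊a / w⌋₊ ≤ ⌊b / w⌋₊ + 1 := by
  have hab : a / w ≤ b / w + 1 := by rwa [div_add_one hw.ne', div_le_div_iff_of_pos_right hw]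
  rcases le_or_gt 0 (b / w) with hb | hb
  · exact Nat.floor_add_one hb ▸ Nat.floor_le_floor hab
  · rw [Nat.floor_eq_zero.2 (hab.trans_lt (add_lt_of_neg_left 1 hb))]
    exact Nat.zero_le _

theorem exists_eq_of_map_succ_le_add_one {s : ℕ → ℕ} {n k : ℕ} (hs : ∀ i < n, s (i + 1) ≤ s i + 1)
    (h₀ : s 0 ≤ k) (hn : k ≤ s n) : ∃ i ≤ n, s i = k := by
  induction n with
  | zero => exact ⟨0, le_rfl, by omega⟩
  | succ n ih =>
    by_cases hk : k ≤ s n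
    · obtain ⟨i, hi, rfl⟩ := ih (fun i hi => hs i (by omega)) hk
      exact ⟨i, by omega, rfl⟩
    · exact ⟨n + 1, le_rfl, by have := hs n (by omega); omega⟩

theorem ChainConnected.exists_floor_div_eq {β w : ℝ} {S : Finset E2} (hS : ChainConnected β S)
    (hw : 0 < w) (hβw : β ≤ w) {p : E2 → ℝ} (hp : LipschitzWith 1 p) {a b : E2} (ha : a ∈ S)
    (hb : b ∈ S) {k : ℕ} (hak : ⌊p a / w⌋₊ ≤ k) (hkb : k ≤ ⌊p b / w⌋₊) :
    ∃ x ∈ S, ⌊p x / w⌋₊ = k := by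
  obtain ⟨n, c, rfl, rfl, hcS, hc⟩ := hS a ha b hb
  obtain ⟨i, hi, rfl⟩ := exists_eq_of_map_succ_le_add_one (s := fun i => ⌊p (c i) / w⌋₊)
    (fun i hi => Nat.floor_div_le_floor_div_add_one hw <| by
      have := (le_abs_self _).trans ((hp.dist_le_mul (c (i + 1)) (c i)).trans_eq (one_mul _))
      linarith [hc i hi]) hak hkb
  exact ⟨c i, hcS i hi, rfl⟩

theorem half_add_one_le_card_filter_range {P : ℕ → Prop} [DecidablePred P] {K : ℕ} (h₀ : P 0)
    (h : ∀ k < K, P k ∨ P (k + 1)) : K / 2 + 1 ≤ #{k ∈ range (K + 1) | P k} := by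
  induction K using Nat.strong_induction_on with
  | _ K ih =>
    rcases K with _ | K
    · simp [filter_singleton, h₀]
    rw [range_add_one, filter_insert]
    by_cases hP : P (K + 1)
    · rw [if_pos hP, card_insert_of_notMem (by simp)]
      have := ih K (by omega) fun k hk => h k (by omega)
      omega
    rw [if_neg hP]
    have hK := (h K (by omega)).resolve_right hP
    rcases K with _ | K
    · simp [filter_singleton, hK]
    rw [range_add_one, filter_insert, if_pos hK, card_insert_of_notMem (by simp)]
    have := ih K (by omega) fun k hk => h k (by omega)
    omega

theorem half_add_one_le_card_of_slabs {α : Type*} {S B : Finset α} {p q : α → ℝ} {w : ℝ}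
    (hw : 0 < w) {K : ℕ} (hslab : ∀ k ≤ K, ∃ x ∈ S, ⌊p x / w⌋₊ = k)
    (hleft : ∀ x ∈ S, x ∉ B → ∃ y ∈ S, p x - w ≤ p y ∧ p y ≤ p x ∧ q x < q y)
    (hright : ∀ x ∈ S, x ∉ B → ∃ y ∈ S, p x ≤ p y ∧ p y ≤ p x + w ∧ q x < q y) :
    K / 2 + 1 ≤ #B := by
  have htop (k : ℕ) (hk : k ≤ K) :
      ∃ x ∈ S, ⌊p x / w⌋₊ = k ∧ ∀ y ∈ S, ⌊p y / w⌋₊ = k → q y ≤ q x := by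
    obtain ⟨x₀, hx₀⟩ := hslab k hk
    obtain ⟨x, hx, hmax⟩ := exists_max_image {x ∈ S | ⌊p x / w⌋₊ = k} q ⟨x₀, mem_filter.2 hx₀⟩
    exact ⟨x, (mem_filter.1 hx).1, (mem_filter.1 hx).2,
      fun y hy hyk => hmax y (mem_filter.2 ⟨hy, hyk⟩)⟩
  have : Nonempty α := let ⟨x, _⟩ := hslab 0 K.zero_le; ⟨x⟩
  choose! top htopS htopk htopmax using htop
  have hleft' (k : ℕ) (hk : k ≤ K) (hB : top k ∉ B) : 0 < k ∧ q (top k) < q (top (k - 1)) := by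
    obtain ⟨y, hy, h₁, h₂, hq⟩ := hleft _ (htopS k hk) hB
    have hyk := htopk k hk ▸ Nat.floor_le_floor (div_le_div_of_nonneg_right h₂ hw.le)
    have hky := htopk k hk ▸ Nat.floor_div_le_floor_div_add_one hw (b := p y) (by linarith)
    have hne : ⌊p y / w⌋₊ ≠ k := fun h => (htopmax k hk y hy h).not_gt hq
    have hy' : ⌊p y / w⌋₊ = k - 1 := by omega
    exact ⟨by omega, hq.trans_le (htopmax (k - 1) (by omega) y hy hy')⟩
  have hright' (k : ℕ) (hk : k < K) (hB : top k ∉ B) : q (top k) < q (top (k + 1)) := by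
    obtain ⟨y, hy, h₁, h₂, hq⟩ := hright _ (htopS k hk.le) hB
    have hky := htopk k hk.le ▸ Nat.floor_le_floor (div_le_div_of_nonneg_right h₁ hw.le)
    have hyk := htopk k hk.le ▸ Nat.floor_div_le_floor_div_add_one hw h₂
    have hne : ⌊p y / w⌋₊ ≠ k := fun h => (htopmax k hk.le y hy h).not_gt hq
    exact hq.trans_le (htopmax (k + 1) hk y hy (by omega))
  calc K / 2 + 1 ≤ #{k ∈ range (K + 1) | top k ∈ B} := by
        refine half_add_one_le_card_filter_range (by_contra fun h => (hleft' 0 K.zero_le h).1.false)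
          fun k hk => or_iff_not_imp_left.2 fun hB => by_contra fun hB' =>
            (hright' k hk hB).asymm (by simpa using (hleft' (k + 1) hk hB').2)
    _ ≤ #B := card_le_card_of_injOn top (fun k hk => (mem_filter.1 hk).2) fun k hk l hl hkl => by
        rw [← htopk k (by simpa [Nat.lt_succ_iff] using (mem_filter.1 hk).1),
          ← htopk l (by simpa [Nat.lt_succ_iff] using (mem_filter.1 hl).1), hkl]

/-- for sufficiently small `ε > 0`, any `(1-ε)`-separated, `(1+ε)`-connected
finite set `S` satisfies `diam S ≤ π · #∂S`. -/
theorem diam_le_boundary_count :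
    ∃ ε₀ : ℝ, 0 < ε₀ ∧ ∀ ε : ℝ, 0 < ε → ε ≤ ε₀ →
      ∀ S : Finset E2, (∀ x ∈ S, ∀ y ∈ S, x ≠ y → 1 - ε ≤ dist x y) →
        ChainConnected (1 + ε) S →
        Metric.diam (S : Set E2) ≤ Real.pi * (bdryAtoms S ε).card := by
  refine ⟨1 / 100, by norm_num, fun ε _ hε S hsep hconn => ?_⟩
  have hw : 0 < 1 + ε := by linarith
  refine Metric.diam_le_of_forall_dist_le (by positivity) fun a ha b hb => ?_
  obtain ⟨f, hf, hfa, hfb⟩ := exists_isometry_complex a b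
  set K := ⌊dist a b / (1 + ε)⌋₊
  have hcard : K / 2 + 1 ≤ #(bdryAtoms S ε) :=
    half_add_one_le_card_of_slabs (p := fun z => (f z).re) (q := fun z => (f z).im) hw
      (fun k hk => hconn.exists_floor_div_eq hw le_rfl
        (LipschitzWith.of_dist_le_mul fun y z => by
          simpa [Real.dist_eq, ← hf.dist_eq y z, dist_eq_norm] using abs_re_le_norm (f y - f z))
        ha hb (by simp [hfa]) (by simpa [hfb] using hk))
      (fun x hx hxB => exists_mem_re_le_im_lt_of_notMem_bdryAtoms hε hsep hf hx hxB)
      (fun x hx hxB => exists_mem_re_ge_im_lt_of_notMem_bdryAtoms hε hsep hf hx hxB)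
  have hK : ((K + 1 : ℕ) : ℝ) ≤ 2 * #(bdryAtoms S ε) := by
    exact_mod_cast (by omega : K + 1 ≤ 2 * _)
  calc dist a b ≤ (1 + ε) * (K + 1) := ((div_lt_iff₀' hw).1 (Nat.lt_floor_add_one _)).le
    _ ≤ (1 + ε) * (2 * #(bdryAtoms S ε)) := by push_cast at hK; gcongr
    _ ≤ Real.pi * #(bdryAtoms S ε) := by
        rw [← mul_assoc]; gcongr; linarith [Real.pi_gt_three]
end
end
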